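/- Let p_i ∈ M_{d_i}(ℂ) be a sequence of matrices such that ‖p_i² − p_i‖₂ → 0 and ‖p_i* − p_i‖₂ → 0 (with respect to the normalized Hilbert–Schmidt norm), and sup_i ‖p_i‖_∞ < ∞. Then there exist orthogonal projections q_i ∈ M_{d_i}(ℂ) with ‖p_i − q_i‖₂ → 0. Moreover if each p_i has real entries, the q_i may be chosen with real entries. -/

import Mathlib

open Filter Topology Matrix

/-- The normalized Hilbert–Schmidt norm `‖M‖₂ = (tr(M*M))^{1/2}` on `M_d(ℂ)`. -/
noncomputable def matNorm2 {d : ℕ} (M : Matrix (Fin d) (Fin d) ℂ) : ℝ :=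
  Real.sqrt (((d : ℂ)⁻¹ * (Mᴴ * M).trace).re)

/-- The operator norm of a matrix, acting on Euclidean space. -/
noncomputable def matOpNorm {d : ℕ} (M : Matrix (Fin d) (Fin d) ℂ) : ℝ :=
  ‖Matrix.toEuclideanCLM (𝕜 := ℂ) M‖

/-!
Let `a = ℜ p` be the self-adjoint part of `p` and `q = χ(a)` its spectral projection onto
`[1/2, ∞)`. The scalar inequality `|x - χ(x)| ≤ 2 |x² - x|`, read off on the eigenvalues of
`a`, gives `‖a - q‖₂ ≤ 2 ‖a² - a‖₂`. The identity
`a² - a = a(a - p) + (a - p)p + (p² - p) + (p - a)` together with `‖xy‖₂ ≤ ‖x‖_∞ ‖y‖₂` bounds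
`‖a² - a‖₂` by `‖p² - p‖₂` plus a multiple of `‖a - p‖₂ = ‖p* - p‖₂ / 2`, with a factor
controlled by `‖a‖_∞ ≤ ‖p‖_∞`. If `p` has real entries then so has `a`, and `q` is fixed by
entrywise conjugation, which commutes with the functional calculus.
-/

open scoped ComplexStarModule

namespace Matrix

section Frobenius

attribute [local instance] frobeniusSeminormedAddCommGroup

lemma frobenius_norm_sq {m n α : Type*} [Fintype m] [Fintype n] [SeminormedAddCommGroup α]
    (A : Matrix m n α) : ‖A‖ ^ 2 = ∑ i, ∑ j, ‖A i j‖ ^ 2 := by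
  simp only [frobenius_norm_def, ← Real.sqrt_eq_rpow, Real.rpow_two]
  exact Real.sq_sqrt (by positivity)

variable {m n 𝕜 : Type*} [Fintype m] [Fintype n] [RCLike 𝕜]

lemma re_trace_conjTranspose_mul_self (A : Matrix m n 𝕜) :
    RCLike.re (Aᴴ * A).trace = ‖A‖ ^ 2 := by
  rw [frobenius_norm_sq, trace, Finset.sum_comm]
  simp [mul_apply, RCLike.conj_mul]

lemma frobenius_norm_mul_le_opNorm_mul [DecidableEq n] {l : Type*} [Fintype l]
    (A : Matrix n n 𝕜) (B : Matrix n l 𝕜) : ‖A * B‖ ≤ ‖toEuclideanCLM (𝕜 := 𝕜) A‖ * ‖B‖ := by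
  have hcol (k : l) :
      ∑ i, ‖(A * B) i k‖ ^ 2 ≤ ‖toEuclideanCLM (𝕜 := 𝕜) A‖ ^ 2 * ∑ i, ‖B i k‖ ^ 2 := by
    have := (toEuclideanCLM (𝕜 := 𝕜) A).le_opNorm (WithLp.toLp 2 fun i => B i k)
    rw [toEuclideanCLM_toLp] at this
    have := pow_le_pow_left₀ (norm_nonneg _) this 2
    simpa [mul_pow, EuclideanSpace.norm_sq_eq, mulVec, dotProduct, mul_apply] using this
  rw [← pow_le_pow_iff_left₀ (norm_nonneg _) (by positivity) two_ne_zero, mul_pow,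
    frobenius_norm_sq, frobenius_norm_sq, Finset.sum_comm,
    Finset.sum_comm (f := fun i j => ‖B i j‖ ^ 2), Finset.mul_sum]
  exact Finset.sum_le_sum fun k _ => hcol k

end Frobenius

end Matrix

section HilbertSchmidt

attribute [local instance] Matrix.frobeniusSeminormedAddCommGroup Matrix.frobeniusNormedSpace


variable {d : ℕ}

lemma matNorm2_eq (M : Matrix (Fin d) (Fin d) ℂ) : matNorm2 M = ‖M‖ / √d := by
  have h := re_trace_conjTranspose_mul_self M
  rw [matNorm2, ← Complex.ofReal_natCast, ← Complex.ofReal_inv, Complex.re_ofReal_mul]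
  rw [RCLike.re_to_complex] at h
  rw [h, Real.sqrt_mul (by positivity), Real.sqrt_sq (norm_nonneg _), Real.sqrt_inv,
    inv_mul_eq_div]

lemma matNorm2_nonneg (M : Matrix (Fin d) (Fin d) ℂ) : 0 ≤ matNorm2 M := Real.sqrt_nonneg _

lemma matNorm2_add_le (A B : Matrix (Fin d) (Fin d) ℂ) :
    matNorm2 (A + B) ≤ matNorm2 A + matNorm2 B := by
  simp only [matNorm2_eq, ← add_div]
  gcongr
  exact norm_add_le A B

lemma matNorm2_sub_comm (A B : Matrix (Fin d) (Fin d) ℂ) :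
    matNorm2 (A - B) = matNorm2 (B - A) := by
  simp only [matNorm2_eq, norm_sub_rev]

lemma matNorm2_conjTranspose (A : Matrix (Fin d) (Fin d) ℂ) : matNorm2 Aᴴ = matNorm2 A := by
  simp only [matNorm2_eq, frobenius_norm_conjTranspose]

lemma matOpNorm_conjTranspose (A : Matrix (Fin d) (Fin d) ℂ) : matOpNorm Aᴴ = matOpNorm A := by
  rw [matOpNorm, matOpNorm, ← star_eq_conjTranspose, map_star,
    ContinuousLinearMap.star_eq_adjoint]
  exact ContinuousLinearMap.adjoint.norm_map _

lemma matOpNorm_realPart_le (p : Matrix (Fin d) (Fin d) ℂ) :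
    matOpNorm (ℜ p : Matrix (Fin d) (Fin d) ℂ) ≤ matOpNorm p := by
  calc matOpNorm (ℜ p : Matrix (Fin d) (Fin d) ℂ) = 2⁻¹ * matOpNorm (p + pᴴ) := by
        rw [realPart_apply_coe, ← Complex.coe_smul, matOpNorm, matOpNorm, map_smul, norm_smul,
          star_eq_conjTranspose]
        simp
    _ ≤ 2⁻¹ * (matOpNorm p + matOpNorm pᴴ) := by
        gcongr; rw [matOpNorm, matOpNorm, matOpNorm, map_add]; exact norm_add_le _ _
    _ = matOpNorm p := by rw [matOpNorm_conjTranspose]; ring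

lemma matNorm2_mul_le_matOpNorm_mul (A B : Matrix (Fin d) (Fin d) ℂ) :
    matNorm2 (A * B) ≤ matOpNorm A * matNorm2 B := by
  simp only [matNorm2_eq, ← mul_div_assoc]
  gcongr
  exact frobenius_norm_mul_le_opNorm_mul A B

lemma matNorm2_mul_le_mul_matOpNorm (A B : Matrix (Fin d) (Fin d) ℂ) :
    matNorm2 (A * B) ≤ matNorm2 A * matOpNorm B := by
  rw [← matNorm2_conjTranspose, conjTranspose_mul, mul_comm, ← matOpNorm_conjTranspose,
    ← matNorm2_conjTranspose A]
  exact matNorm2_mul_le_matOpNorm_mul _ _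

lemma matNorm2_conjStarAlgAut (U : unitary (Matrix (Fin d) (Fin d) ℂ))
    (X : Matrix (Fin d) (Fin d) ℂ) : matNorm2 (Unitary.conjStarAlgAut ℂ _ U X) = matNorm2 X := by
  have h : (Unitary.conjStarAlgAut ℂ _ U X)ᴴ * Unitary.conjStarAlgAut ℂ _ U X =
      Unitary.conjStarAlgAut ℂ _ U (Xᴴ * X) := by
    rw [← star_eq_conjTranspose, ← map_star, ← map_mul, star_eq_conjTranspose]
  rw [matNorm2, matNorm2, h, Unitary.conjStarAlgAut_apply, trace_mul_cycle, ← mul_assoc,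
    Unitary.coe_star_mul_self, one_mul]

lemma matNorm2_cfc {A : Matrix (Fin d) (Fin d) ℂ} (hA : A.IsHermitian) (f : ℝ → ℝ) :
    matNorm2 (cfc f A) = √(∑ j, f (hA.eigenvalues j) ^ 2) / √d := by
  rw [hA.cfc_eq, IsHermitian.cfc, matNorm2_conjStarAlgAut, matNorm2_eq, frobenius_norm_diagonal,
    EuclideanSpace.norm_eq]
  simp

lemma matNorm2_cfc_le_of_abs_le {A : Matrix (Fin d) (Fin d) ℂ} (hA : A.IsHermitian)
    {f g : ℝ → ℝ} {c : ℝ} (hc : 0 ≤ c) (hfg : ∀ x, |f x| ≤ c * |g x|) :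
    matNorm2 (cfc f A) ≤ c * matNorm2 (cfc g A) := by
  rw [matNorm2_cfc hA, matNorm2_cfc hA, ← mul_div_assoc, ← Real.sqrt_sq hc,
    ← Real.sqrt_mul (sq_nonneg c), Finset.mul_sum]
  gcongr with j
  rw [← mul_pow, ← sq_abs (c * _), abs_mul, abs_of_nonneg hc, ← sq_abs (f _)]
  gcongr
  exact hfg _

lemma matNorm2_sub_realPart (p : Matrix (Fin d) (Fin d) ℂ) :
    matNorm2 (p - (ℜ p : Matrix (Fin d) (Fin d) ℂ)) = matNorm2 (pᴴ - p) / 2 := by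
  have h : p - (ℜ p : Matrix (Fin d) (Fin d) ℂ) = (2⁻¹ : ℝ) • (p - pᴴ) := by
    rw [realPart_apply_coe, star_eq_conjTranspose]; module
  rw [matNorm2_eq, matNorm2_eq, h, norm_smul, norm_sub_rev]
  simp; ring

lemma matNorm2_mul_self_sub_self_le (a p : Matrix (Fin d) (Fin d) ℂ) :
    matNorm2 (a * a - a) ≤
      matNorm2 (p * p - p) + (matOpNorm a + matOpNorm p + 1) * matNorm2 (a - p) := by
  have hdecomp : a * a - a = a * (a - p) + (a - p) * p + (p * p - p) + (p - a) := by
    noncomm_ring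
  have h1 := matNorm2_add_le (a * (a - p)) ((a - p) * p)
  have h2 := matNorm2_add_le (a * (a - p) + (a - p) * p) (p * p - p)
  have h3 := matNorm2_add_le (a * (a - p) + (a - p) * p + (p * p - p)) (p - a)
  have h4 := matNorm2_mul_le_matOpNorm_mul a (a - p)
  have h5 := matNorm2_mul_le_mul_matOpNorm (a - p) p
  rw [matNorm2_sub_comm p a] at h3
  rw [hdecomp]
  linarith

end HilbertSchmidt

lemma abs_sub_indicator_Ici_le (x : ℝ) :
    |x - (Set.Ici (1 / 2 : ℝ)).indicator 1 x| ≤ 2 * |x ^ 2 - x| := by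
  rw [show x ^ 2 - x = x * (x - 1) by ring, abs_mul]
  by_cases hx : 1 / 2 ≤ x
  · rw [Set.indicator_of_mem (Set.mem_Ici.2 hx), Pi.one_apply]
    have : 1 ≤ 2 * |x| := by rw [abs_of_pos (by linarith)]; linarith
    nlinarith [abs_nonneg (x - 1)]
  · rw [Set.indicator_of_notMem (mt Set.mem_Ici.1 hx), sub_zero]
    have : 1 ≤ 2 * |x - 1| := by rw [abs_of_neg (by linarith)]; linarith
    nlinarith [abs_nonneg x]

section SpectralProjection

variable {n 𝕜 : Type*} [Fintype n] [DecidableEq n] [RCLike 𝕜]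

-- Every function is continuous on the finite spectrum of a matrix, so `cfc` of this
-- discontinuous indicator is not a junk value.
noncomputable def spectralProjection (a : Matrix n n 𝕜) : Matrix n n 𝕜 :=
  cfc ((Set.Ici (1 / 2 : ℝ)).indicator 1) a

lemma isSelfAdjoint_spectralProjection (a : Matrix n n 𝕜) :
    IsSelfAdjoint (spectralProjection a) :=
  cfc_predicate _ a

lemma spectralProjection_mul_self (a : Matrix n n 𝕜) :
    spectralProjection a * spectralProjection a = spectralProjection a := by
  rw [spectralProjection, ← cfc_mul _ _ a (finite_real_spectrum.continuousOn _)
    (finite_real_spectrum.continuousOn _)]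
  congr with x
  simp only [Set.indicator_apply]
  split_ifs <;> simp

end SpectralProjection

section Estimate

variable {d : ℕ}

lemma matNorm2_sub_spectralProjection_le {a : Matrix (Fin d) (Fin d) ℂ} (ha : a.IsHermitian) :
    matNorm2 (a - spectralProjection a) ≤ 2 * matNorm2 (a * a - a) := by
  have hcont := fun f : ℝ → ℝ => finite_real_spectrum (A := a).continuousOn f
  have h1 :
      a - spectralProjection a = cfc (fun x => x - (Set.Ici (1 / 2 : ℝ)).indicator 1 x) a := by
    rw [cfc_sub _ _ a (hcont _) (hcont _), cfc_id' ℝ a ha.isSelfAdjoint, spectralProjection]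
  have h2 : a * a - a = cfc (fun x : ℝ => x ^ 2 - x) a := by
    rw [cfc_sub _ _ a (hcont _) (hcont _), cfc_pow_id a 2 ha.isSelfAdjoint,
      cfc_id' ℝ a ha.isSelfAdjoint, sq]
  rw [h1, h2]
  exact matNorm2_cfc_le_of_abs_le ha zero_le_two abs_sub_indicator_Ici_le

lemma matNorm2_sub_spectralProjection_realPart_le (p : Matrix (Fin d) (Fin d) ℂ) :
    matNorm2 (p - spectralProjection (ℜ p : Matrix (Fin d) (Fin d) ℂ)) ≤
      2 * matNorm2 (p * p - p) + (2 * matOpNorm p + 3 / 2) * matNorm2 (pᴴ - p) := by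
  set a : Matrix (Fin d) (Fin d) ℂ := (ℜ p : Matrix (Fin d) (Fin d) ℂ)
  have ha : a.IsHermitian := (ℜ p).2
  have h1 := matNorm2_add_le (p - a) (a - spectralProjection a)
  have h2 := matNorm2_sub_spectralProjection_le ha
  have h3 := matNorm2_mul_self_sub_self_le a p
  have h4 := mul_le_mul_of_nonneg_right (matOpNorm_realPart_le p) (matNorm2_nonneg (pᴴ - p))
  rw [sub_add_sub_cancel, matNorm2_sub_realPart] at h1
  rw [matNorm2_sub_comm a p, matNorm2_sub_realPart] at h3
  linarith

end Estimate

section Real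

lemma im_realPart_eq_zero {n : Type*} {p : Matrix n n ℂ} (hre : ∀ j k, (p j k).im = 0)
    (j k : n) : ((ℜ p : Matrix n n ℂ) j k).im = 0 := by
  simp [realPart_apply_coe, hre]

variable {n : Type*} [Fintype n] [DecidableEq n]

noncomputable def conjEntrywise : Matrix n n ℂ →⋆ₐ[ℝ] Matrix n n ℂ :=
  { Complex.conjAe.toAlgHom.mapMatrix with
    map_star' := fun M => by ext; simp }

lemma conjEntrywise_eq_self {a : Matrix n n ℂ} (ha : ∀ j k, (a j k).im = 0) :
    conjEntrywise a = a := by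
  ext j k
  exact Complex.conj_eq_iff_im.2 (ha j k)

lemma im_cfc_eq_zero {a : Matrix n n ℂ} (ha : IsSelfAdjoint a) (hre : ∀ j k, (a j k).im = 0)
    (f : ℝ → ℝ) (j k : n) : (cfc f a j k).im = 0 := by
  have h := conjEntrywise.map_cfc f a (finite_real_spectrum.continuousOn _)
    (continuous_id.matrix_map Complex.continuous_conj) ha (by rwa [conjEntrywise_eq_self hre])
  rw [conjEntrywise_eq_self hre] at h
  exact Complex.conj_eq_iff_im.1 congr($h j k)

end Real

/-- If `p_i ∈ M_{d_i}(ℂ)` satisfy `‖p_i² − p_i‖₂ → 0`, `‖p_i* − p_i‖₂ → 0` and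
`sup_i ‖p_i‖_∞ < ∞`, then there are orthogonal projections `q_i` with `‖p_i − q_i‖₂ → 0`;
moreover, if each `p_i` has real entries then the `q_i` may be chosen with real entries. -/
theorem exists_projections_close {d : ℕ → ℕ}
    (p : ∀ i : ℕ, Matrix (Fin (d i)) (Fin (d i)) ℂ)
    (h1 : Tendsto (fun i => matNorm2 (p i * p i - p i)) atTop (𝓝 0))
    (h2 : Tendsto (fun i => matNorm2 ((p i)ᴴ - p i)) atTop (𝓝 0))
    (h3 : ∃ C : ℝ, ∀ i, matOpNorm (p i) ≤ C) :
    (∃ q : ∀ i : ℕ, Matrix (Fin (d i)) (Fin (d i)) ℂ,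
      (∀ i, (q i)ᴴ = q i ∧ q i * q i = q i) ∧
      Tendsto (fun i => matNorm2 (p i - q i)) atTop (𝓝 0)) ∧
    ((∀ i j k, (p i j k).im = 0) →
      ∃ q : ∀ i : ℕ, Matrix (Fin (d i)) (Fin (d i)) ℂ,
        (∀ i, (q i)ᴴ = q i ∧ q i * q i = q i ∧ ∀ j k, (q i j k).im = 0) ∧
        Tendsto (fun i => matNorm2 (p i - q i)) atTop (𝓝 0)) := by
  obtain ⟨C, hC⟩ := h3
  set q := fun i => spectralProjection (ℜ (p i) : Matrix (Fin (d i)) (Fin (d i)) ℂ)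
  have hproj (i : ℕ) : (q i)ᴴ = q i ∧ q i * q i = q i :=
    ⟨(isSelfAdjoint_spectralProjection _).star_eq, spectralProjection_mul_self _⟩
  have hlim : Tendsto (fun i => matNorm2 (p i - q i)) atTop (𝓝 0) := by
    refine squeeze_zero (fun i => matNorm2_nonneg _) (fun i => ?_)
      (by simpa using (h1.const_mul 2).add (h2.const_mul (2 * C + 3 / 2)))
    refine (matNorm2_sub_spectralProjection_realPart_le (p i)).trans ?_
    gcongr
    · exact matNorm2_nonneg _
    · exact hC i
  refine ⟨⟨q, hproj, hlim⟩, fun hre => ⟨q, fun i => ⟨(hproj i).1, (hproj i).2, ?_⟩, hlim⟩⟩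
  exact im_cfc_eq_zero (ℜ (p i)).2 (im_realPart_eq_zero (hre i)) _
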